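/- For the Følner sets F_N = {A^{α} B^{β} C^{γ} : 0 ≤ α, β, γ ≤ N−1} in the semigroup T generated by A, B, C, one has A F_N ∩ F_N = {A^{α} B^{β} C^{γ} : 1 ≤ α ≤ N−1, 0 ≤ β, γ ≤ N−1}, and hence |A F_N ∩ F_N| = N²(N−1). -/

import Mathlib

def MatA : Matrix (Fin 2) (Fin 2) ℤ := !![1, 0; 0, 2]
def MatB : Matrix (Fin 2) (Fin 2) ℤ := !![2, 0; 0, 1]
def MatC : Matrix (Fin 2) (Fin 2) ℤ := !![0, 2; 3, 0]

/-- The multiplicative semigroup generated by `A`, `B`, `C`. -/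
def SemigroupT : Subsemigroup (Matrix (Fin 2) (Fin 2) ℤ) :=
  Subsemigroup.closure {MatA, MatB, MatC}

/-- The Følner sets `F_N = {A^α B^β C^γ : 0 ≤ α, β, γ ≤ N-1}`. -/
def FolnerF (N : ℕ) : Finset (Matrix (Fin 2) (Fin 2) ℤ) :=
  (Finset.range N ×ˢ Finset.range N ×ˢ Finset.range N).image
    fun p => MatA ^ p.1 * MatB ^ p.2.1 * MatC ^ p.2.2

/-!
Since `A^α B^β = diag(2^β, 2^α)` and `C² = 6`, the word `A^α B^β C^γ` is diagonal for even `γ`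
and antidiagonal for odd `γ`, with entries of the form `2^i 3^j`; unique factorization recovers
`(α, β, γ)` from them. So `(α, β, γ) ↦ A^α B^β C^γ` is injective, and as left multiplication by
`A` raises `α` by one, `A F_N ∩ F_N` is the image of the box `[1, N) × [0, N) × [0, N)`.
-/

open Finset Matrix

theorem Nat.pow_mul_pow_inj_of_prime {p q : ℕ} (hp : p.Prime) (hq : q.Prime) (hpq : p ≠ q)
    {x y z w : ℕ} (h : p ^ x * q ^ y = p ^ z * q ^ w) : x = z ∧ y = w := by
  have hf (r : ℕ) := congrArg (fun n => n.factorization r) h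
  simp only [Nat.factorization_mul (pow_ne_zero _ hp.ne_zero) (pow_ne_zero _ hq.ne_zero),
    hp.factorization_pow, hq.factorization_pow] at hf
  exact ⟨by simpa [hpq] using hf p, by simpa [hpq.symm] using hf q⟩

def monomialT (p : ℕ × ℕ × ℕ) : Matrix (Fin 2) (Fin 2) ℤ :=
  MatA ^ p.1 * MatB ^ p.2.1 * MatC ^ p.2.2

lemma FolnerF_eq_image_monomialT (N : ℕ) :
    FolnerF N = (range N ×ˢ range N ×ˢ range N).image monomialT :=
  rfl

lemma MatA_pow_mul_MatB_pow (a b : ℕ) : MatA ^ a * MatB ^ b = !![2 ^ b, 0; 0, 2 ^ a] := by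
  have hA : MatA = diagonal ![1, 2] := by ext i j; fin_cases i <;> fin_cases j <;> rfl
  have hB : MatB = diagonal ![2, 1] := by ext i j; fin_cases i <;> fin_cases j <;> rfl
  rw [hA, hB, diagonal_pow, diagonal_pow, diagonal_mul_diagonal]
  ext i j; fin_cases i <;> fin_cases j <;> simp

lemma MatC_sq : MatC ^ 2 = (6 : ℤ) • 1 := by
  simp [sq, MatC, one_fin_two, smul_of]

lemma monomialT_two_mul (a b k : ℕ) :
    monomialT (a, b, 2 * k) = !![2 ^ (k + b) * 3 ^ k, 0; 0, 2 ^ (k + a) * 3 ^ k] := by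
  rw [monomialT, pow_mul, MatC_sq, smul_pow, one_pow, mul_smul_one, MatA_pow_mul_MatB_pow]
  ext i j
  fin_cases i <;> fin_cases j <;>
    simp only [Fin.zero_eta, Fin.mk_one, Fin.isValue, Matrix.smul_apply, of_apply, cons_val',
      cons_val_zero, cons_val_one, cons_val_fin_one, smul_eq_mul, mul_zero] <;>
    rw [show (6 : ℤ) = 2 * 3 by norm_num, mul_pow] <;> ring

lemma monomialT_two_mul_add_one (a b k : ℕ) :
    monomialT (a, b, 2 * k + 1) =
      !![0, 2 ^ (k + b + 1) * 3 ^ k; 2 ^ (k + a) * 3 ^ (k + 1), 0] := by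
  rw [monomialT, pow_succ, ← mul_assoc]
  change monomialT (a, b, 2 * k) * MatC = _
  rw [monomialT_two_mul, MatC, mul_fin_two]
  ext i j
  fin_cases i <;> fin_cases j <;>
    simp only [Fin.zero_eta, Fin.mk_one, Fin.isValue, of_apply, cons_val', cons_val_zero,
      cons_val_one, cons_val_fin_one, mul_zero, zero_mul, add_zero, zero_add] <;> ring

lemma monomialT_injective : Function.Injective monomialT := by
  have exponents_eq {x y z w : ℕ} (h : (2 : ℤ) ^ x * 3 ^ y = 2 ^ z * 3 ^ w) : x = z ∧ y = w :=
    Nat.pow_mul_pow_inj_of_prime Nat.prime_two Nat.prime_three (by norm_num) (by exact_mod_cast h)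
  rintro ⟨a, b, c⟩ ⟨a', b', c'⟩ h
  obtain ⟨k, rfl | rfl⟩ := Nat.even_or_odd' c <;> obtain ⟨k', rfl | rfl⟩ := Nat.even_or_odd' c' <;>
    simp only [monomialT_two_mul, monomialT_two_mul_add_one] at h
  · obtain ⟨hb, hk⟩ := exponents_eq (congrFun₂ h 0 0)
    obtain ⟨ha, -⟩ := exponents_eq (congrFun₂ h 1 1)
    obtain ⟨rfl, rfl, rfl⟩ : a = a' ∧ b = b' ∧ k = k' := by omega
    rfl
  · simpa using congrFun₂ h 0 0
  · simpa using congrFun₂ h 0 0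
  · obtain ⟨hb, hk⟩ := exponents_eq (congrFun₂ h 0 1)
    obtain ⟨ha, -⟩ := exponents_eq (congrFun₂ h 1 0)
    obtain ⟨rfl, rfl, rfl⟩ : a = a' ∧ b = b' ∧ k = k' := by omega
    rfl

lemma MatA_mul_monomialT (a b c : ℕ) : MatA * monomialT (a, b, c) = monomialT (a + 1, b, c) := by
  simp only [monomialT, pow_succ', mul_assoc]

lemma image_MatA_mul_FolnerF (N : ℕ) :
    (FolnerF N).image (MatA * ·) = (Ico 1 (N + 1) ×ˢ range N ×ˢ range N).image monomialT := by
  ext m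
  simp only [FolnerF_eq_image_monomialT, mem_image, mem_product, mem_range, mem_Ico, Prod.exists]
  constructor
  · rintro ⟨-, ⟨a, b, c, ⟨ha, hb, hc⟩, rfl⟩, rfl⟩
    exact ⟨a + 1, b, c, ⟨⟨by omega, by omega⟩, hb, hc⟩, (MatA_mul_monomialT a b c).symm⟩
  · rintro ⟨_ | a, b, c, ⟨ha, hb, hc⟩, rfl⟩
    · omega
    exact ⟨_, ⟨a, b, c, ⟨by omega, hb, hc⟩, rfl⟩, MatA_mul_monomialT a b c⟩

theorem matrixT_inter_card_general (N : ℕ) :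
    (((FolnerF N).image fun m => MatA * m) ∩ FolnerF N =
      (Finset.Ico 1 N ×ˢ Finset.range N ×ˢ Finset.range N).image
        (fun p => MatA ^ p.1 * MatB ^ p.2.1 * MatC ^ p.2.2)) ∧
    (((FolnerF N).image fun m => MatA * m) ∩ FolnerF N).card = N ^ 2 * (N - 1) := by
  have hset : ((FolnerF N).image fun m => MatA * m) ∩ FolnerF N =
      (Ico 1 N ×ˢ range N ×ˢ range N).image monomialT := by
    rw [image_MatA_mul_FolnerF, FolnerF_eq_image_monomialT,
      ← image_inter _ _ monomialT_injective, product_inter_product, inter_self, range_eq_Ico,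
      Ico_inter_Ico]
    congr 3
    omega
  refine ⟨hset, ?_⟩
  rw [hset, card_image_of_injective _ monomialT_injective, card_product, card_product,
    Nat.card_Ico, card_range]
  ring

/-- `A F_N ∩ F_N = {A^α B^β C^γ : 1 ≤ α ≤ N-1, 0 ≤ β, γ ≤ N-1}` and hence
`|A F_N ∩ F_N| = N² (N-1)`. -/
theorem matrixT_inter_card (N : ℕ) (hN : 2 ≤ N) :
    (((FolnerF N).image fun m => MatA * m) ∩ FolnerF N =
      (Finset.Ico 1 N ×ˢ Finset.range N ×ˢ Finset.range N).image
        (fun p => MatA ^ p.1 * MatB ^ p.2.1 * MatC ^ p.2.2)) ∧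
    (((FolnerF N).image fun m => MatA * m) ∩ FolnerF N).card = N ^ 2 * (N - 1) :=
  matrixT_inter_card_general N
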